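/- arXiv:2410.19841 — 2 statements merged into one kernel-verified Lean document; each statement's English description precedes it below -/
import Mathlib

section
/- Let n ≥ 1, δ > 0, β < n+2, and let u ∈ (C³(ℝ^n))^n with bounded third derivatives near x. Then the remainder term R := (n+2) μ c^{δ,β} ∫_{B_δ(0)} (w⊗w)/‖w‖^{β+2} R_σ(u; x, w) dw, where R_σ(u;x,w) = (1/6)∇∇∇u(x+σw) : w⊗w⊗w is the third-order Taylor remainder (σ ∈ [0,1] depending on w), satisfies ‖R‖ ≤ M_x δ (n+2−β) for a constant M_x depending only on local bounds of the third derivatives of u at x. In particular R → 0 as δ → 0⁺ with β fixed, and R → 0 as β → (n+2)⁻ with δ fixed. -/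
open MeasureTheory Filter

/-!
Since `‖R_σ(w)‖ ≤ (K/6)‖w‖³`, the integrand is bounded by `(K/6)‖w‖^{3-β}`, whose integral over
`B_δ(0)` is, in polar coordinates, `n |B_1| δ^{n+3-β} / (n+3-β)`. The normalization
`c^{δ,β} ∝ (n+2-β) / δ^{n+2-β}` turns this into `O(δ (n+2-β))`.
-/

/-- The normalization constant `c^{δ,β}` of the peridynamic kernel. -/
noncomputable def cdb (n : ℕ) (δ β : ℝ) : ℝ :=
  2 * (n + 2 - β) * Real.Gamma ((n : ℝ) / 2 + 1) /
    (Real.pi ^ ((n : ℝ) / 2) * δ ^ ((n : ℝ) + 2 - β))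

open Set Metric Topology

section RadialIntegral

variable {E : Type*} [NormedAddCommGroup E] [NormedSpace ℝ E] [FiniteDimensional ℝ E]
  [MeasurableSpace E] [BorelSpace E] [Nontrivial E] (μ : Measure E) [μ.IsAddHaarMeasure]

theorem integrableOn_ball_norm_rpow {p : ℝ} (hp : -(Module.finrank ℝ E : ℝ) < p) (r : ℝ) :
    IntegrableOn (fun x : E => ‖x‖ ^ p) (ball 0 r) μ :=
  integrableOn_ball_of_norm_le_rpow Module.finrank_pos (C := 1) (α := -p) (by linarith)
    (.of_forall fun x => by simp [Real.abs_rpow_of_nonneg (norm_nonneg x)])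
    (measurable_norm.pow_const p).aestronglyMeasurable

theorem setIntegral_ball_norm_rpow {p δ : ℝ} (hp : -(Module.finrank ℝ E : ℝ) < p) (hδ : 0 ≤ δ) :
    ∫ x in ball 0 δ, ‖x‖ ^ p ∂μ =
      Module.finrank ℝ E * μ.real (ball 0 1) *
        (δ ^ (Module.finrank ℝ E + p) / (Module.finrank ℝ E + p)) := by
  have hexp : -1 < (Module.finrank ℝ E : ℝ) - 1 + p := by linarith
  have hradial :
      ∫ y in Ioi (0 : ℝ), y ^ (Module.finrank ℝ E - 1) • (Iio δ).indicator (· ^ p) y =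
        ∫ y in (0)..δ, y ^ ((Module.finrank ℝ E : ℝ) - 1 + p) := by
    rw [intervalIntegral.integral_of_le hδ, integral_Ioc_eq_integral_Ioo, ← Ioi_inter_Iio,
      ← setIntegral_indicator measurableSet_Iio]
    refine setIntegral_congr_fun measurableSet_Ioi fun y (hy : 0 < y) => ?_
    by_cases h : y < δ
    · simp only [indicator_of_mem (mem_Iio.2 h), smul_eq_mul]
      rw [← Real.rpow_natCast, ← Real.rpow_add hy, Nat.cast_sub Module.finrank_pos, Nat.cast_one]
    · simp [h]
  rw [← integral_indicator measurableSet_ball]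
  calc ∫ x, (ball (0 : E) δ).indicator (‖·‖ ^ p) x ∂μ
      = ∫ x, (Iio δ).indicator (· ^ p) ‖x‖ ∂μ := by
        congr with x
        by_cases h : ‖x‖ < δ <;> simp [indicator, h]
    _ = _ := by
        rw [integral_fun_norm_addHaar, hradial, integral_rpow (.inl hexp),
          Real.zero_rpow (by linarith), nsmul_eq_mul, smul_eq_mul]
        ring_nf

end RadialIntegral

section InnerProductSpace

variable {E : Type*} [NormedAddCommGroup E] [InnerProductSpace ℝ E]

theorem norm_inner_div_rpow_smul_le {C β : ℝ} (hC : 0 ≤ C) {w v : E}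
    (hv : ‖v‖ ≤ C * ‖w‖ ^ 3) :
    ‖(inner ℝ w v / ‖w‖ ^ (β + 2)) • w‖ ≤ C * ‖w‖ ^ (3 - β) := by
  rcases eq_or_ne w 0 with rfl | hw
  · simp only [smul_zero, norm_zero]
    positivity
  have hw0 : 0 < ‖w‖ := norm_pos_iff.2 hw
  have hinner : |inner ℝ w v| ≤ C * ‖w‖ ^ (4 : ℝ) := calc
    |inner ℝ w v| ≤ ‖w‖ * ‖v‖ := abs_real_inner_le_norm w v
    _ ≤ ‖w‖ * (C * ‖w‖ ^ 3) := by gcongr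
    _ = C * ‖w‖ ^ (4 : ℝ) := by norm_cast; ring
  calc ‖(inner ℝ w v / ‖w‖ ^ (β + 2)) • w‖
      = |inner ℝ w v| / ‖w‖ ^ (β + 2) * ‖w‖ := by
        rw [norm_smul, Real.norm_eq_abs, abs_div, abs_of_pos (Real.rpow_pos_of_pos hw0 _)]
    _ ≤ C * ‖w‖ ^ (4 : ℝ) / ‖w‖ ^ (β + 2) * ‖w‖ := by gcongr
    _ = C * ‖w‖ ^ (3 - β) := by
        rw [mul_div_assoc, ← Real.rpow_sub hw0, mul_assoc, ← Real.rpow_add_one hw0.ne']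
        ring_nf

variable [FiniteDimensional ℝ E] [MeasurableSpace E] [BorelSpace E] [Nontrivial E]
  (μ : Measure E) [μ.IsAddHaarMeasure]

theorem norm_setIntegral_ball_inner_div_rpow_smul_le {R : E → E} {C δ β : ℝ} (hC : 0 ≤ C)
    (hR : ∀ w, ‖R w‖ ≤ C * ‖w‖ ^ 3) (hδ : 0 ≤ δ) (hβ : β < Module.finrank ℝ E + 3) :
    ‖∫ w in ball 0 δ, (inner ℝ w (R w) / ‖w‖ ^ (β + 2)) • w ∂μ‖ ≤
      C * (Module.finrank ℝ E * μ.real (ball 0 1) *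
        (δ ^ (Module.finrank ℝ E + (3 - β)) / (Module.finrank ℝ E + (3 - β)))) := by
  have hp : -(Module.finrank ℝ E : ℝ) < 3 - β := by linarith
  rw [← setIntegral_ball_norm_rpow μ hp hδ, ← integral_const_mul]
  exact norm_integral_le_of_norm_le ((integrableOn_ball_norm_rpow μ hp δ).const_mul C)
    (.of_forall fun w => norm_inner_div_rpow_smul_le hC (hR w))

end InnerProductSpace

theorem cdb_pos (n : ℕ) {δ β : ℝ} (hδ : 0 < δ) (hβ : β < n + 2) : 0 < cdb n δ β := by
  have hs : 0 < (n : ℝ) + 2 - β := by linarith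
  have hπ : 0 < Real.pi ^ ((n : ℝ) / 2) := Real.rpow_pos_of_pos Real.pi_pos _
  have hΓ : 0 < Real.Gamma ((n : ℝ) / 2 + 1) := Real.Gamma_pos_of_pos (by positivity)
  have hδs : 0 < δ ^ ((n : ℝ) + 2 - β) := Real.rpow_pos_of_pos hδ _
  unfold cdb
  positivity

theorem cdb_mul_rpow_div_le (n : ℕ) {δ β : ℝ} (hδ : 0 < δ) (hβ : β < n + 2) :
    cdb n δ β * (δ ^ ((n : ℝ) + (3 - β)) / ((n : ℝ) + (3 - β))) ≤
      2 * Real.Gamma ((n : ℝ) / 2 + 1) / Real.pi ^ ((n : ℝ) / 2) * δ * ((n : ℝ) + 2 - β) := by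
  have hs : 0 < (n : ℝ) + 2 - β := by linarith
  have hπ : 0 < Real.pi ^ ((n : ℝ) / 2) := Real.rpow_pos_of_pos Real.pi_pos _
  have hΓ : 0 < Real.Gamma ((n : ℝ) / 2 + 1) := Real.Gamma_pos_of_pos (by positivity)
  have hδs : 0 < δ ^ ((n : ℝ) + 2 - β) := Real.rpow_pos_of_pos hδ _
  have hsucc : (n : ℝ) + (3 - β) = ((n : ℝ) + 2 - β) + 1 := by ring
  calc cdb n δ β * (δ ^ ((n : ℝ) + (3 - β)) / ((n : ℝ) + (3 - β)))
      = 2 * Real.Gamma ((n : ℝ) / 2 + 1) / Real.pi ^ ((n : ℝ) / 2) * δ * ((n : ℝ) + 2 - β) /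
          (((n : ℝ) + 2 - β) + 1) := by
        rw [cdb, hsucc, Real.rpow_add_one hδ.ne']
        field_simp
    _ ≤ 2 * Real.Gamma ((n : ℝ) / 2 + 1) / Real.pi ^ ((n : ℝ) / 2) * δ * ((n : ℝ) + 2 - β) :=
        div_le_self (by positivity) (by linarith)

theorem tendsto_nhdsWithin_zero_of_norm_le {F : Type*} [SeminormedAddCommGroup F]
    {f : ℝ → F} {g : ℝ → ℝ} {a : ℝ} {s : Set ℝ} (hg : ContinuousAt g a) (hga : g a = 0)
    (hfg : ∀ x ∈ s, ‖f x‖ ≤ g x) : Tendsto f (𝓝[s] a) (𝓝 0) := by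
  refine squeeze_zero_norm' ?_ ((hga ▸ hg.tendsto).mono_left nhdsWithin_le_nhds)
  filter_upwards [self_mem_nhdsWithin] using hfg

theorem norm_smul_setIntegral_ball_le (n : ℕ) [NeZero n] (μ : ℝ) {K : ℝ} (hK : 0 ≤ K)
    {Rσ : EuclideanSpace ℝ (Fin n) → EuclideanSpace ℝ (Fin n)}
    (hRσ : ∀ w, ‖Rσ w‖ ≤ K / 6 * ‖w‖ ^ 3) {δ β : ℝ} (hδ : 0 < δ) (hβ : β < n + 2) :
    ‖(((n : ℝ) + 2) * μ * cdb n δ β) •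
        ∫ w in ball (0 : EuclideanSpace ℝ (Fin n)) δ, (inner ℝ w (Rσ w) / ‖w‖ ^ (β + 2)) • w‖ ≤
      ((n : ℝ) + 2) * |μ| * (K / 6 * (n * volume.real (ball (0 : EuclideanSpace ℝ (Fin n)) 1)))
        * (2 * Real.Gamma ((n : ℝ) / 2 + 1) / Real.pi ^ ((n : ℝ) / 2)) * δ * ((n : ℝ) + 2 - β) := by
  have hI := norm_setIntegral_ball_inner_div_rpow_smul_le volume (by positivity) hRσ hδ.le
    (β := β) (by rw [finrank_euclideanSpace_fin]; linarith)
  rw [finrank_euclideanSpace_fin] at hI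
  have hc := cdb_pos n hδ hβ
  calc _ = ((n : ℝ) + 2) * |μ| * cdb n δ β *
        ‖∫ w in ball (0 : EuclideanSpace ℝ (Fin n)) δ,
          (inner ℝ w (Rσ w) / ‖w‖ ^ (β + 2)) • w‖ := by
        rw [norm_smul, norm_mul, norm_mul, Real.norm_eq_abs, Real.norm_eq_abs, Real.norm_eq_abs,
          abs_of_pos hc, abs_of_pos (by positivity : (0 : ℝ) < n + 2)]
    _ ≤ ((n : ℝ) + 2) * |μ| * cdb n δ β *
          (K / 6 * (n * volume.real (ball (0 : EuclideanSpace ℝ (Fin n)) 1) *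
          (δ ^ ((n : ℝ) + (3 - β)) / ((n : ℝ) + (3 - β))))) := by gcongr
    _ = ((n : ℝ) + 2) * |μ| *
          (K / 6 * (n * volume.real (ball (0 : EuclideanSpace ℝ (Fin n)) 1))) *
          (cdb n δ β * (δ ^ ((n : ℝ) + (3 - β)) / ((n : ℝ) + (3 - β)))) := by ring
    _ ≤ _ := (mul_le_mul_of_nonneg_left (cdb_mul_rpow_div_le n hδ hβ) (by positivity)).trans_eq
        (by ring)

/-- The Taylor remainder term
`R = (n+2) μ c^{δ,β} ∫_{B_δ(0)} (w⊗w)/‖w‖^{β+2} R_σ(u;x,w) dw` of the bond-based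
operator satisfies `‖R‖ ≤ M_x δ (n+2-β)` whenever the third-order remainder obeys the
cubic bound `‖R_σ(w)‖ ≤ (K/6)‖w‖³`; in particular `R → 0` as `δ → 0⁺` (fixed `β`) and
as `β → (n+2)⁻` (fixed `δ`). -/
theorem stmt14 (n : ℕ) (hn : 1 ≤ n) (μ K : ℝ) (hK : 0 ≤ K)
    (Rσ : EuclideanSpace ℝ (Fin n) → EuclideanSpace ℝ (Fin n))
    (hRσ : ∀ w, ‖Rσ w‖ ≤ K / 6 * ‖w‖ ^ 3) :
    (∃ Mx : ℝ, 0 ≤ Mx ∧ ∀ δ β : ℝ, 0 < δ → β < n + 2 →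
      ‖(((n : ℝ) + 2) * μ * cdb n δ β) •
          ∫ w in Metric.ball (0 : EuclideanSpace ℝ (Fin n)) δ,
            ((inner ℝ w (Rσ w) : ℝ) / ‖w‖ ^ (β + 2)) • w‖ ≤ Mx * δ * ((n : ℝ) + 2 - β)) ∧
    (∀ β : ℝ, β < n + 2 →
      Tendsto (fun δ : ℝ => (((n : ℝ) + 2) * μ * cdb n δ β) •
          ∫ w in Metric.ball (0 : EuclideanSpace ℝ (Fin n)) δ,
            ((inner ℝ w (Rσ w) : ℝ) / ‖w‖ ^ (β + 2)) • w)
        (nhdsWithin 0 (Set.Ioi 0)) (nhds 0)) ∧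
    (∀ δ : ℝ, 0 < δ →
      Tendsto (fun β : ℝ => (((n : ℝ) + 2) * μ * cdb n δ β) •
          ∫ w in Metric.ball (0 : EuclideanSpace ℝ (Fin n)) δ,
            ((inner ℝ w (Rσ w) : ℝ) / ‖w‖ ^ (β + 2)) • w)
        (nhdsWithin ((n : ℝ) + 2) (Set.Iio ((n : ℝ) + 2))) (nhds 0)) := by
  have : NeZero n := ⟨by omega⟩
  set Mx := ((n : ℝ) + 2) * |μ| *
    (K / 6 * (n * volume.real (ball (0 : EuclideanSpace ℝ (Fin n)) 1))) *
    (2 * Real.Gamma ((n : ℝ) / 2 + 1) / Real.pi ^ ((n : ℝ) / 2))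
  have hMx : ∀ δ β : ℝ, 0 < δ → β < n + 2 → _ := fun δ β hδ hβ =>
    norm_smul_setIntegral_ball_le n μ hK hRσ hδ hβ
  refine ⟨⟨Mx, by positivity, hMx⟩, fun β hβ => ?_, fun δ hδ => ?_⟩
  · exact tendsto_nhdsWithin_zero_of_norm_le (by fun_prop) (by simp) fun δ hδ => hMx δ β hδ hβ
  · exact tendsto_nhdsWithin_zero_of_norm_le (by fun_prop) (by simp) fun β hβ => hMx δ β hδ hβ
end

section
/- Let n ≥ 1 and for each nonzero k ∈ ℤ^n let M_k be a negative-definite real symmetric n×n matrix. Suppose f, g are in H^{s₁}(𝕋^n), H^{s₂}(𝕋^n) respectively, and there exist C, r > 0 with ‖(√(−M_k))^{−1}‖ ≤ C for ‖k‖ ≥ r. Then for every t ≥ 0, the distribution U(t) with Fourier coefficients Û_0(t) = f̂_0 + t ĝ_0 and Û_k(t) = cos(√(−M_k) t) f̂_k + sin(√(−M_k) t)(√(−M_k))^{−1} ĝ_k (k ≠ 0) belongs to H^s(𝕋^n) with s = min{s₁, s₂}. -/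
/-!
Conjugation by the orthogonal matrix `P k` preserves the operator norm, so the cosine propagator
has norm at most `1`, and the sine propagator, which factors as `sin(√(-M_k) t) · (√(-M_k))⁻¹`,
has norm at most `C` once `‖k‖ ≥ r`. Hence `‖Û_k‖² ≤ 2‖f̂_k‖² + 2C²‖ĝ_k‖²` for all but finitely
many `k`, and the weight `(1 + ‖k‖²)^(min s₁ s₂)` is dominated by both `(1 + ‖k‖²)^s₁` and
`(1 + ‖k‖²)^s₂`.
-/

open Matrix

/-- Euclidean norm of a multi-index `k ∈ ℤⁿ`. -/
noncomputable def znorm {n : ℕ} (k : Fin n → ℤ) : ℝ :=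
  Real.sqrt (∑ i, ((k i : ℝ)) ^ 2)

open Filter
-- Square matrices carry the operator norm of `toEuclideanCLM`, the norm appearing in `hbound`.
open scoped Matrix.Norms.L2Operator

theorem norm_le_znorm {n : ℕ} (k : Fin n → ℤ) : ‖k‖ ≤ znorm k := by
  refine (pi_norm_le_iff_of_nonneg (Real.sqrt_nonneg _)).mpr fun i => ?_
  rw [Int.norm_eq_abs, ← Real.sqrt_sq_eq_abs]
  exact Real.sqrt_le_sqrt
    (Finset.single_le_sum (f := fun j => ((k j : ℝ)) ^ 2) (fun j _ => sq_nonneg _)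
      (Finset.mem_univ i))

theorem tendsto_znorm_cofinite_atTop {n : ℕ} : Tendsto (znorm (n := n)) cofinite atTop :=
  tendsto_atTop_mono norm_le_znorm
    (cocompact_eq_cofinite (Fin n → ℤ) ▸ tendsto_norm_cocompact_atTop)

theorem CStarRing.norm_conj_mem_unitary {E : Type*} [NormedRing E] [StarRing E] [CStarRing E]
    (A : E) {U : E} (hU : U ∈ unitary E) : ‖U * A * star U‖ = ‖A‖ := by
  rw [norm_mul_mem_unitary _ (Unitary.star_mem hU), norm_mem_unitary_mul _ hU]

section Orthogonal

variable {ι : Type*} [Fintype ι] [DecidableEq ι]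

theorem Matrix.conj_mul_of_transpose_mul_self {R : Type*} [Semiring R] {P : Matrix ι ι R}
    (hP : Pᵀ * P = 1) (A B : Matrix ι ι R) :
    P * (A * B) * Pᵀ = (P * A * Pᵀ) * (P * B * Pᵀ) := by
  simp only [Matrix.mul_assoc]
  rw [← Matrix.mul_assoc Pᵀ, hP, Matrix.one_mul]

theorem Matrix.norm_conj_diagonal_le_one {P : Matrix ι ι ℝ} (hP : Pᵀ * P = 1) {d : ι → ℝ}
    (hd : ∀ i, |d i| ≤ 1) : ‖P * diagonal d * Pᵀ‖ ≤ 1 := by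
  rw [← conjTranspose_eq_transpose_of_trivial, ← star_eq_conjTranspose,
    CStarRing.norm_conj_mem_unitary _ (mem_unitaryGroup_iff'.mpr hP), l2_opNorm_diagonal]
  exact (pi_norm_le_iff_of_nonneg zero_le_one).mpr hd

theorem Matrix.norm_le_of_eq_conj_diagonal_mulVec {P : Matrix ι ι ℝ} (hP : Pᵀ * P = 1)
    {c s μ : ι → ℝ} (hc : ∀ i, |c i| ≤ 1) (hs : ∀ i, |s i| ≤ 1) {C : ℝ}
    (hμ : ‖P * diagonal μ * Pᵀ‖ ≤ C) {u x y : EuclideanSpace ℝ ι}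
    (hu : (u : ι → ℝ) = (P * diagonal c * Pᵀ) *ᵥ x
      + (P * diagonal (fun i => s i * μ i) * Pᵀ) *ᵥ y) :
    ‖u‖ ≤ ‖x‖ + C * ‖y‖ := by
  have hB : ‖P * diagonal (fun i => s i * μ i) * Pᵀ‖ ≤ C := by
    rw [← diagonal_mul_diagonal, conj_mul_of_transpose_mul_self hP]
    calc _ ≤ ‖P * diagonal s * Pᵀ‖ * ‖P * diagonal μ * Pᵀ‖ := norm_mul_le _ _
      _ ≤ 1 * C := mul_le_mul (norm_conj_diagonal_le_one hP hs) hμ (norm_nonneg _) zero_le_one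
      _ = C := one_mul C
  have hu' : u = WithLp.toLp 2 ((P * diagonal c * Pᵀ) *ᵥ x)
      + WithLp.toLp 2 ((P * diagonal (fun i => s i * μ i) * Pᵀ) *ᵥ y) :=
    WithLp.ofLp_injective 2 (by simpa using hu)
  calc ‖u‖ ≤ ‖P * diagonal c * Pᵀ‖ * ‖x‖ + ‖P * diagonal (fun i => s i * μ i) * Pᵀ‖ * ‖y‖ :=
        hu' ▸ (norm_add_le _ _).trans (add_le_add (l2_opNorm_mulVec _ _) (l2_opNorm_mulVec _ _))
    _ ≤ 1 * ‖x‖ + C * ‖y‖ := by gcongr; exact norm_conj_diagonal_le_one hP hc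
    _ = ‖x‖ + C * ‖y‖ := by rw [one_mul]

end Orthogonal

theorem stmt15_general (n : ℕ)
    (P : (Fin n → ℤ) → Matrix (Fin n) (Fin n) ℝ)
    (hP : ∀ k, (P k)ᵀ * P k = 1)
    (lam : (Fin n → ℤ) → Fin n → ℝ)
    (s₁ s₂ : ℝ) (f g : (Fin n → ℤ) → EuclideanSpace ℝ (Fin n))
    (hf : Summable fun k => (1 + znorm k ^ 2) ^ s₁ * ‖f k‖ ^ 2)
    (hg : Summable fun k => (1 + znorm k ^ 2) ^ s₂ * ‖g k‖ ^ 2)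
    (C r : ℝ)
    (hbound : ∀ k, k ≠ 0 → r ≤ znorm k →
      ‖Matrix.toEuclideanCLM (𝕜 := ℝ)
          (P k * Matrix.diagonal (fun i => (Real.sqrt (-lam k i))⁻¹) * (P k)ᵀ)‖ ≤ C)
    (t : ℝ)
    (U : (Fin n → ℤ) → EuclideanSpace ℝ (Fin n))
    (hU : ∀ k, k ≠ 0 → (U k : Fin n → ℝ) =
      (P k * Matrix.diagonal (fun i => Real.cos (Real.sqrt (-lam k i) * t)) *
          (P k)ᵀ).mulVec (f k) +
      (P k * Matrix.diagonal
          (fun i => Real.sin (Real.sqrt (-lam k i) * t) * (Real.sqrt (-lam k i))⁻¹) *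
          (P k)ᵀ).mulVec (g k)) :
    Summable fun k => (1 + znorm k ^ 2) ^ (min s₁ s₂) * ‖U k‖ ^ 2 := by
  refine .of_norm_bounded_eventually ((hf.mul_left 2).add (hg.mul_left (2 * C ^ 2))) ?_
  filter_upwards [eventually_cofinite_ne 0, tendsto_znorm_cofinite_atTop.eventually_ge_atTop r]
    with k hk0 hkr
  have hUk : ‖U k‖ ≤ ‖f k‖ + C * ‖g k‖ :=
    norm_le_of_eq_conj_diagonal_mulVec (hP k) (fun _ => Real.abs_cos_le_one _)
      (fun _ => Real.abs_sin_le_one _) (hbound k hk0 hkr) (hU k hk0)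
  have hbase : 1 ≤ 1 + znorm k ^ 2 := le_add_of_nonneg_right (sq_nonneg _)
  rw [Real.norm_of_nonneg (by positivity)]
  calc (1 + znorm k ^ 2) ^ min s₁ s₂ * ‖U k‖ ^ 2
      ≤ (1 + znorm k ^ 2) ^ min s₁ s₂ * (2 * (‖f k‖ ^ 2 + (C * ‖g k‖) ^ 2)) := by
        gcongr
        exact (pow_le_pow_left₀ (norm_nonneg _) hUk 2).trans add_sq_le
    _ = 2 * ((1 + znorm k ^ 2) ^ min s₁ s₂ * ‖f k‖ ^ 2)
        + 2 * C ^ 2 * ((1 + znorm k ^ 2) ^ min s₁ s₂ * ‖g k‖ ^ 2) := by ring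
    _ ≤ 2 * ((1 + znorm k ^ 2) ^ s₁ * ‖f k‖ ^ 2)
        + 2 * C ^ 2 * ((1 + znorm k ^ 2) ^ s₂ * ‖g k‖ ^ 2) := by
        gcongr
        exacts [min_le_left _ _, min_le_right _ _]

/-- Spatial regularity of the solution of the homogeneous peridynamic evolution
equation: with `M_k = P_k diag(λ_k) P_kᵀ` negative definite, `f ∈ H^{s₁}`,
`g ∈ H^{s₂}`, and `‖(√(-M_k))⁻¹‖ ≤ C` for `‖k‖ ≥ r`, the coefficients
`Û_k(t) = cos(√(-M_k)t) f̂_k + sin(√(-M_k)t)(√(-M_k))⁻¹ ĝ_k` define a distribution in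
`H^{min{s₁,s₂}}` for every `t ≥ 0`. -/
theorem stmt15 (n : ℕ) (hn : 1 ≤ n)
    (P : (Fin n → ℤ) → Matrix (Fin n) (Fin n) ℝ)
    (hP : ∀ k, (P k)ᵀ * P k = 1) (hP' : ∀ k, P k * (P k)ᵀ = 1)
    (lam : (Fin n → ℤ) → Fin n → ℝ)
    (hlam : ∀ k, k ≠ 0 → ∀ i, lam k i < 0)
    (s₁ s₂ : ℝ) (f g : (Fin n → ℤ) → EuclideanSpace ℝ (Fin n))
    (hf : Summable fun k => (1 + znorm k ^ 2) ^ s₁ * ‖f k‖ ^ 2)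
    (hg : Summable fun k => (1 + znorm k ^ 2) ^ s₂ * ‖g k‖ ^ 2)
    (C r : ℝ) (hC : 0 < C) (hr : 0 < r)
    (hbound : ∀ k, k ≠ 0 → r ≤ znorm k →
      ‖Matrix.toEuclideanCLM (𝕜 := ℝ)
          (P k * Matrix.diagonal (fun i => (Real.sqrt (-lam k i))⁻¹) * (P k)ᵀ)‖ ≤ C)
    (t : ℝ) (ht : 0 ≤ t)
    (U : (Fin n → ℤ) → EuclideanSpace ℝ (Fin n))
    (hU0 : U 0 = f 0 + t • g 0)
    (hU : ∀ k, k ≠ 0 → (U k : Fin n → ℝ) =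
      (P k * Matrix.diagonal (fun i => Real.cos (Real.sqrt (-lam k i) * t)) *
          (P k)ᵀ).mulVec (f k) +
      (P k * Matrix.diagonal
          (fun i => Real.sin (Real.sqrt (-lam k i) * t) * (Real.sqrt (-lam k i))⁻¹) *
          (P k)ᵀ).mulVec (g k)) :
    Summable fun k => (1 + znorm k ^ 2) ^ (min s₁ s₂) * ‖U k‖ ^ 2 :=
  stmt15_general n P hP lam s₁ s₂ f g hf hg C r hbound t U hU
end
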